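/- arXiv:2107.08157 — 5 statements merged into one kernel-verified Lean document; each statement's English description precedes it below -/
import Mathlib

section
/- Let T1 < T2 be real numbers, let (λ_n)_{n≥1} be a strictly increasing sequence of positive real numbers, and let (a_n)_{n≥1} be real numbers such that the series ∑_{n=1}^∞ |a_n| e^{-λ_n T1} converges. If ∑_{n=1}^∞ a_n e^{-λ_n t} = 0 for every t with T1 < t < T2, then a_n = 0 for every n ≥ 1. -/
/-!
On the half-plane `Re s > T1` the series `∑ aₙ e^{-λₙ s}` is dominated termwise by
`|aₙ| e^{-λₙ T1}`, so it is holomorphic there, and by the identity theorem its vanishing on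
`(T1, T2)` propagates to every real `t > T1`. If `aₙ = 0` for `n < m`, then `e^{λₘ t}` times the
series is `aₘ + ∑_{n > m} aₙ e^{-(λₙ - λₘ) t}`, which tends to `aₘ` as `t → ∞` by dominated
convergence; since it vanishes for large `t`, `aₘ = 0`, and induction on `m` concludes.
-/

open Real Filter Topology Set

noncomputable def dirichletSeries (a lam : ℕ → ℝ) (s : ℂ) : ℂ :=
  ∑' n, (a n : ℂ) * Complex.exp (-(lam n : ℂ) * s)

lemma dirichletSeries_ofReal (a lam : ℕ → ℝ) (t : ℝ) :
    dirichletSeries a lam t = ((∑' n, a n * rexp (-lam n * t) : ℝ) : ℂ) := by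
  rw [dirichletSeries, Complex.ofReal_tsum]
  push_cast
  rfl

lemma differentiableOn_dirichletSeries {a lam : ℕ → ℝ} {T : ℝ} (hlam : ∀ n, 0 ≤ lam n)
    (hsum : Summable fun n => |a n| * rexp (-lam n * T)) :
    DifferentiableOn ℂ (dirichletSeries a lam) {s | T < s.re} := by
  refine Complex.differentiableOn_tsum_of_summable_norm hsum (fun n => ?_)
    (isOpen_lt continuous_const Complex.continuous_re) fun n s hs => ?_
  · exact (differentiableOn_const _).mul (by fun_prop)
  · rw [norm_mul, Complex.norm_real, Complex.norm_exp, Real.norm_eq_abs]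
    gcongr
    simpa using mul_le_mul_of_nonneg_left hs.le (hlam n)

lemma AnalyticOnNhd.eqOn_zero_of_eqOn_zero_Ioo {f : ℂ → ℂ} {U : Set ℂ}
    (hf : AnalyticOnNhd ℂ f U) (hU : IsPreconnected U) {t₀ t₁ : ℝ} (ht : t₀ < t₁)
    (hsub : ∀ t ∈ Ioo t₀ t₁, (t : ℂ) ∈ U) (hzero : ∀ t ∈ Ioo t₀ t₁, f t = 0) :
    EqOn f 0 U := by
  obtain ⟨c, hc⟩ := nonempty_Ioo.mpr ht
  refine hf.eqOn_zero_of_preconnected_of_frequently_eq_zero hU (hsub c hc) ?_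
  have hmap : Tendsto ((↑) : ℝ → ℂ) (𝓝[≠] c) (𝓝[≠] (c : ℂ)) :=
    Complex.continuous_ofReal.continuousWithinAt.tendsto_nhdsWithin
      fun _ h => mt Complex.ofReal_inj.mp h
  refine hmap.frequently (Eventually.frequently ?_)
  filter_upwards [nhdsWithin_le_nhds (Ioo_mem_nhds hc.1 hc.2)] with t ht using hzero t ht

lemma tendsto_exp_mul_tsum_of_eq_zero_of_lt {a lam : ℕ → ℝ} {T : ℝ} (hlam : StrictMono lam)
    (hsum : Summable fun n => |a n| * rexp (-lam n * T)) {m : ℕ} (ha : ∀ n < m, a n = 0) :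
    Tendsto (fun t => rexp (lam m * t) * ∑' n, a n * rexp (-lam n * t)) atTop (𝓝 (a m)) := by
  have hshift : ∀ t, rexp (lam m * t) * ∑' n, a n * rexp (-lam n * t)
      = ∑' n, a n * rexp ((lam m - lam n) * t) := fun t => by
    rw [← tsum_mul_left]
    congr 1 with n
    rw [mul_left_comm, ← Real.exp_add]
    ring_nf
  simp only [hshift]
  have hlim : ∀ n, Tendsto (fun t => a n * rexp ((lam m - lam n) * t)) atTop
      (𝓝 (if n = m then a m else 0)) := fun n => by
    rcases lt_trichotomy n m with hnm | rfl | hmn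
    · simp [ha n hnm, hnm.ne]
    · simp
    · have hneg : lam m - lam n < 0 := sub_neg.mpr (hlam hmn)
      simpa [hmn.ne'] using ((tendsto_exp_atBot.comp
        (tendsto_id.const_mul_atTop_of_neg hneg)).const_mul (a n))
  have hdom : ∀ᶠ t in atTop, ∀ n, ‖a n * rexp ((lam m - lam n) * t)‖
      ≤ |a n| * rexp (-lam n * T) * rexp (lam m * T) := by
    filter_upwards [eventually_ge_atTop T] with t ht n
    rw [norm_mul, Real.norm_eq_abs, Real.norm_of_nonneg (exp_pos _).le, mul_assoc, ← exp_add]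
    rcases lt_or_ge n m with hnm | hmn
    · simp [ha n hnm]
    · gcongr
      nlinarith [hlam.monotone hmn]
  simpa using tendsto_tsum_of_dominated_convergence (hsum.mul_right _) hlim hdom

theorem eq_zero_of_tsum_mul_exp_eventually_eq_zero {a lam : ℕ → ℝ} {T : ℝ}
    (hlam : StrictMono lam) (hsum : Summable fun n => |a n| * rexp (-lam n * T))
    (hzero : ∀ᶠ t in atTop, ∑' n, a n * rexp (-lam n * t) = 0) (m : ℕ) : a m = 0 := by
  induction m using Nat.strong_induction_on with
  | _ m ih =>
    refine tendsto_nhds_unique (tendsto_exp_mul_tsum_of_eq_zero_of_lt hlam hsum ih)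
      (tendsto_const_nhds.congr' ?_)
    filter_upwards [hzero] with t ht
    rw [ht, mul_zero]

theorem dirichlet_series_uniqueness
    (T1 T2 : ℝ) (hT : T1 < T2)
    (lam : ℕ → ℝ) (hmono : StrictMono lam) (hpos : ∀ n, 0 < lam n)
    (a : ℕ → ℝ)
    (hsum : Summable (fun n => |a n| * Real.exp (-(lam n) * T1)))
    (hzero : ∀ t, T1 < t → t < T2 → ∑' n, a n * Real.exp (-(lam n) * t) = 0) :
    ∀ n, a n = 0 := by
  have hU : IsOpen {s : ℂ | T1 < s.re} := isOpen_lt continuous_const Complex.continuous_re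
  have hanalytic := (differentiableOn_dirichletSeries (fun n => (hpos n).le) hsum).analyticOnNhd hU
  have hvanish := hanalytic.eqOn_zero_of_eqOn_zero_Ioo (convex_halfSpace_re_gt T1).isPreconnected
    hT (fun t ht => by simpa using ht.1)
    (fun t ht => by rw [dirichletSeries_ofReal, hzero t ht.1 ht.2, Complex.ofReal_zero])
  refine eq_zero_of_tsum_mul_exp_eventually_eq_zero hmono hsum ?_
  filter_upwards [eventually_gt_atTop T1] with t ht
  have := hvanish (show T1 < (t : ℂ).re by simpa using ht)
  rwa [dirichletSeries_ofReal, Pi.zero_apply, Complex.ofReal_eq_zero] at this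
end

section
/- Let (p_n)_{n≥1} be a strictly increasing sequence of positive real numbers tending to infinity, and let (α_n)_{n≥1} be real numbers with ∑_{n=1}^∞ |α_n| < ∞. If ∑_{n=1}^∞ α_n sin(p_n t) = 0 for every t > 0, then α_n = 0 for every n ≥ 1. -/
/-! Multiply the series by `sin (p m * t)` and average over `[0, T]`. Absolute summability lets the
average pass through the sum, and as `T → ∞` the average of `sin (p n * t) * sin (p m * t)` tends
to `1 / 2` for `n = m` and to `0` otherwise (product-to-sum, with `p n ≠ p m` and `p n + p m ≠ 0`).
Dominated convergence then turns the vanishing averaged series into `α m / 2 = 0`. -/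

open Real Filter Topology intervalIntegral

lemma tendsto_inv_mul_integral_cos_mul (c : ℝ) :
    Tendsto (fun T => T⁻¹ * ∫ t in (0 : ℝ)..T, cos (c * t)) atTop
      (𝓝 (if c = 0 then 1 else 0)) := by
  split_ifs with hc
  · subst hc
    refine tendsto_const_nhds.congr' ?_
    filter_upwards [eventually_ne_atTop 0] with T hT
    simp [hT]
  · have hint (T : ℝ) : ∫ t in (0 : ℝ)..T, cos (c * t) = sin (c * T) / c := by
      simp [integral_comp_mul_left (fun x => cos x) hc, integral_cos, div_eq_inv_mul]
    simp_rw [hint]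
    refine tendsto_inv_atTop_zero.zero_mul_isBoundedUnder_le ⟨|c|⁻¹, eventually_map.2 ?_⟩
    refine .of_forall fun T => ?_
    simpa [abs_div] using div_le_div_of_nonneg_right (abs_sin_le_one (c * T)) (abs_nonneg c)

lemma tendsto_inv_mul_integral_sin_mul_sin {a b : ℝ} (hab : a + b ≠ 0) :
    Tendsto (fun T => T⁻¹ * ∫ t in (0 : ℝ)..T, sin (a * t) * sin (b * t)) atTop
      (𝓝 (if a = b then 1 / 2 else 0)) := by
  have hprod (t : ℝ) : sin (a * t) * sin (b * t) = (cos ((a - b) * t) - cos ((a + b) * t)) / 2 := by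
    rw [sub_mul, add_mul, cos_sub, cos_add]; ring
  have hint (T : ℝ) : ∫ t in (0 : ℝ)..T, sin (a * t) * sin (b * t)
      = ((∫ t in (0 : ℝ)..T, cos ((a - b) * t)) - ∫ t in (0 : ℝ)..T, cos ((a + b) * t)) / 2 := by
    simp_rw [hprod]
    rw [integral_div, integral_sub] <;> exact (by fun_prop : Continuous _).intervalIntegrable _ _
  have := ((tendsto_inv_mul_integral_cos_mul (a - b)).sub
    (tendsto_inv_mul_integral_cos_mul (a + b))).div_const 2
  simp_rw [hint]
  convert this using 2 with T
  · ring
  · split_ifs <;> simp_all [sub_eq_zero]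

lemma hasSum_intervalIntegral_mul_of_summable_abs {ι : Type*} [Countable ι] {α : ι → ℝ}
    (hα : Summable fun n => |α n|) {u : ι → ℝ → ℝ} (hu : ∀ n, Continuous (u n))
    (hu1 : ∀ n t, |u n t| ≤ 1) (a b : ℝ) :
    HasSum (fun n => ∫ t in a..b, α n * u n t) (∫ t in a..b, ∑' n, α n * u n t) := by
  have hbound (n : ι) (t : ℝ) : ‖α n * u n t‖ ≤ |α n| := by
    simpa [abs_mul] using mul_le_mul_of_nonneg_left (hu1 n t) (abs_nonneg (α n))
  refine hasSum_integral_of_dominated_convergence (fun n _ => |α n|)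
    (fun n => ((hu n).const_mul (α n)).aestronglyMeasurable)
    (fun n => .of_forall fun t _ => hbound n t) (.of_forall fun _ _ => hα)
    intervalIntegrable_const (.of_forall fun t _ => ?_)
  exact (hα.of_norm_bounded (hbound · t)).hasSum

lemma tsum_mul_intervalIntegral_eq_zero {ι : Type*} [Countable ι] {α : ι → ℝ}
    (hα : Summable fun n => |α n|) {u : ι → ℝ → ℝ} (hu : ∀ n, Continuous (u n))
    (hu1 : ∀ n t, |u n t| ≤ 1) {a b : ℝ} (h : ∀ t ∈ Set.uIcc a b, ∑' n, α n * u n t = 0) :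
    ∑' n, α n * ∫ t in a..b, u n t = 0 := by
  simp_rw [← integral_const_mul]
  rw [(hasSum_intervalIntegral_mul_of_summable_abs hα hu hu1 a b).tsum_eq, integral_congr h,
    integral_zero]

lemma abs_inv_mul_integral_le {f : ℝ → ℝ} {C T : ℝ} (hf : ∀ t, |f t| ≤ C) (hT : 0 < T) :
    |T⁻¹ * ∫ t in (0 : ℝ)..T, f t| ≤ C := by
  have := norm_integral_le_of_norm_le_const (a := 0) (b := T) fun t _ =>
    (norm_eq_abs _).trans_le (hf t)
  rw [abs_mul, abs_inv, abs_of_pos hT, inv_mul_le_iff₀ hT]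
  simpa [abs_of_pos hT, mul_comm] using this

theorem sine_series_uniqueness_general
    (p : ℕ → ℝ) (hmono : StrictMono p) (hpos : ∀ n, 0 < p n)
    (α : ℕ → ℝ) (hsum : Summable (fun n => |α n|))
    (hzero : ∀ t : ℝ, 0 < t → ∑' n, α n * Real.sin (p n * t) = 0) :
    ∀ n, α n = 0 := by
  intro m
  have hbound (n : ℕ) (t : ℝ) : |sin (p n * t) * sin (p m * t)| ≤ 1 := by
    simpa [abs_mul] using mul_le_one₀ (abs_sin_le_one _) (abs_nonneg _) (abs_sin_le_one _)
  have hvanish (t : ℝ) (ht : 0 ≤ t) : ∑' n, α n * (sin (p n * t) * sin (p m * t)) = 0 := by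
    simp_rw [← mul_assoc, tsum_mul_right]
    rcases ht.eq_or_lt with rfl | ht
    · simp
    · rw [hzero t ht, zero_mul]
  have hmeans : (fun T => ∑' n, α n * (T⁻¹ * ∫ t in (0 : ℝ)..T, sin (p n * t) * sin (p m * t)))
      =ᶠ[atTop] fun _ => 0 := by
    filter_upwards [eventually_gt_atTop 0] with T hT
    simp_rw [mul_left_comm (α _), tsum_mul_left]
    rw [tsum_mul_intervalIntegral_eq_zero hsum (fun n => by fun_prop) hbound
      fun t ht => hvanish t (Set.uIcc_of_le hT.le ▸ ht).1, mul_zero]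
  have hlim := tendsto_tsum_of_dominated_convergence hsum
    (fun n => (tendsto_inv_mul_integral_sin_mul_sin
      (add_pos (hpos n) (hpos m)).ne').const_mul (α n))
    (by filter_upwards [eventually_gt_atTop 0] with T hT n
        rw [norm_mul, norm_eq_abs]
        exact mul_le_of_le_one_right (abs_nonneg _) (abs_inv_mul_integral_le (hbound n) hT))
  rw [tsum_eq_single m fun n hn => by simp [hmono.injective.ne hn], if_pos rfl] at hlim
  linarith [tendsto_nhds_unique hlim (tendsto_const_nhds.congr' hmeans.symm)]

theorem sine_series_uniqueness
    (p : ℕ → ℝ) (hmono : StrictMono p) (hpos : ∀ n, 0 < p n)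
    (htop : Tendsto p atTop atTop)
    (α : ℕ → ℝ) (hsum : Summable (fun n => |α n|))
    (hzero : ∀ t : ℝ, 0 < t → ∑' n, α n * Real.sin (p n * t) = 0) :
    ∀ n, α n = 0 :=
  sine_series_uniqueness_general p hmono hpos α hsum hzero
end

section
/- Let T > 0 and let μ : [0, T] → ℝ be continuously differentiable with μ(T) = 0. Then r·∫_0^T μ(s)·cos(r·(T - s)) ds − μ(0)·sin(r·T) → 0 as r → +∞; that is, ∫_0^T μ(s) cos(r(T-s)) ds = μ(0)·sin(rT)/r + o(1/r) as r → ∞. -/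
open Real Filter MeasureTheory intervalIntegral
open Topology FourierTransform Interval

/-! Integrating by parts against `s ↦ sin (r (T - s))`, which vanishes at `s = T`, gives
`r ∫₀ᵀ μ(s) cos (r (T - s)) ds - μ(0) sin (r T) = ∫₀ᵀ μ'(s) sin (r (T - s)) ds`,
and the right-hand side tends to `0` by the Riemann–Lebesgue lemma applied to the continuous
function `μ'`. -/

lemma tendsto_integral_mul_sin_mul_sub_atTop {f : ℝ → ℝ} (hf : Integrable f) (c : ℝ) :
    Tendsto (fun r => ∫ s, f s * sin (r * (c - s))) atTop (𝓝 0) := by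
  -- `𝐞 x = exp (2π i x)`, so frequency `r` is Fourier variable `r / (2π)`.
  set F : ℝ → ℂ := fun w => ∫ s, 𝐞 (-(s * w)) • (f s : ℂ)
  have hF : Tendsto (fun r => F (r / (2 * π))) atTop (𝓝 0) :=
    (Real.tendsto_integral_exp_smul_cocompact _).comp
      ((tendsto_id.atTop_div_const (by positivity)).mono_right atTop_le_cocompact)
  refine squeeze_zero_norm (fun r => ?_) (tendsto_zero_iff_norm_tendsto_zero.mp hF)
  have hphase : ∀ s, 𝐞 ((c - s) * (r / (2 * π))) = Complex.exp ((r * (c - s) : ℝ) * Complex.I) := by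
    intro s
    rw [Real.fourierChar_apply]
    congr 3
    field_simp
  have hint : Integrable (fun s => Complex.exp ((r * (c - s) : ℝ) * Complex.I) * (f s : ℂ)) :=
    hf.ofReal.bdd_mul (c := 1) (Continuous.aestronglyMeasurable (by fun_prop))
      (.of_forall fun s => by rw [Complex.norm_exp_ofReal_mul_I])
  have him : ∫ s, f s * sin (r * (c - s)) = (𝐞 (c * (r / (2 * π))) * F (r / (2 * π))).im := by
    rw [← MeasureTheory.integral_const_mul]
    simp_rw [Circle.smul_def, smul_eq_mul, ← mul_assoc, ← Circle.coe_mul, ← AddChar.map_add_eq_mul,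
      ← sub_eq_add_neg, ← sub_mul, hphase]
    rw [← RCLike.im_to_complex, ← integral_im hint]
    refine integral_congr_ae (.of_forall fun s => ?_)
    simp only [RCLike.im_to_complex]
    rw [Complex.im_mul_ofReal, Complex.exp_ofReal_mul_I_im, mul_comm]
  calc ‖∫ s, f s * sin (r * (c - s))‖ ≤ ‖𝐞 (c * (r / (2 * π))) * F (r / (2 * π))‖ := by
        rw [him, Real.norm_eq_abs]; exact Complex.abs_im_le_norm _
    _ = ‖F (r / (2 * π))‖ := by rw [norm_mul, Circle.norm_coe, one_mul]

lemma tendsto_setIntegral_mul_sin_mul_sub_atTop {g : ℝ → ℝ} {S : Set ℝ} (hS : MeasurableSet S)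
    (hg : IntegrableOn g S) (c : ℝ) :
    Tendsto (fun r => ∫ s in S, g s * sin (r * (c - s))) atTop (𝓝 0) := by
  simpa only [← MeasureTheory.integral_indicator hS, Set.indicator_mul_left] using
    tendsto_integral_mul_sin_mul_sub_atTop (hg.integrable_indicator hS) c

lemma tendsto_intervalIntegral_mul_sin_mul_sub_atTop {g : ℝ → ℝ} {a b : ℝ}
    (hg : IntervalIntegrable g volume a b) (c : ℝ) :
    Tendsto (fun r => ∫ s in a..b, g s * sin (r * (c - s))) atTop (𝓝 0) := by
  simpa only [intervalIntegral, sub_zero] using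
    (tendsto_setIntegral_mul_sin_mul_sub_atTop measurableSet_Ioc hg.1 c).sub
      (tendsto_setIntegral_mul_sin_mul_sub_atTop measurableSet_Ioc hg.2 c)

lemma mul_intervalIntegral_mul_cos_eq_intervalIntegral_deriv_mul_sin {u u' : ℝ → ℝ} {a b : ℝ}
    (hu : ∀ x ∈ [[a, b]], HasDerivWithinAt u (u' x) [[a, b]] x)
    (hu' : IntervalIntegrable u' volume a b) (r : ℝ) :
    r * (∫ s in a..b, u s * cos (r * (b - s))) - u a * sin (r * (b - a)) =
      ∫ s in a..b, u' s * sin (r * (b - s)) := by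
  have hv : ∀ x ∈ [[a, b]], HasDerivWithinAt (fun s => sin (r * (b - s)))
      (-(r * cos (r * (b - x)))) [[a, b]] x := fun x _ => by
    simpa [mul_comm r] using (((hasDerivAt_id x).const_sub b).const_mul r).sin.hasDerivWithinAt
  have ibp := integral_mul_deriv_eq_deriv_mul_of_hasDerivWithinAt hu hv hu'
    (Continuous.intervalIntegrable (by fun_prop) a b)
  simp only [sub_self, mul_zero, sin_zero, zero_sub, mul_neg, intervalIntegral.integral_neg] at ibp
  rw [← intervalIntegral.integral_const_mul]
  simp_rw [mul_left_comm r]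
  linarith

theorem riemann_lebesgue_cos_asymptotics_general
    (T : ℝ) (hT : 0 < T) (μ : ℝ → ℝ)
    (hμ : ContDiffOn ℝ 1 μ (Set.Icc 0 T)) :
    Tendsto (fun r : ℝ =>
        r * (∫ s in (0:ℝ)..T, μ s * Real.cos (r * (T - s))) - μ 0 * Real.sin (r * T))
      atTop (nhds 0) := by
  have hIcc : [[0, T]] = Set.Icc 0 T := Set.uIcc_of_le hT.le
  have hderiv : ∀ x ∈ [[0, T]], HasDerivWithinAt μ (derivWithin μ (Set.Icc 0 T) x) [[0, T]] x :=
    fun x hx => by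
      rw [hIcc] at hx ⊢
      exact (hμ.differentiableOn one_ne_zero x hx).hasDerivWithinAt
  have hcont : ContinuousOn (derivWithin μ (Set.Icc 0 T)) [[0, T]] :=
    hIcc ▸ hμ.continuousOn_derivWithin (uniqueDiffOn_Icc hT) le_rfl
  refine (tendsto_intervalIntegral_mul_sin_mul_sub_atTop hcont.intervalIntegrable T).congr
    fun r => ?_
  rw [← mul_intervalIntegral_mul_cos_eq_intervalIntegral_deriv_mul_sin hderiv
    hcont.intervalIntegrable, sub_zero]

theorem riemann_lebesgue_cos_asymptotics
    (T : ℝ) (hT : 0 < T) (μ : ℝ → ℝ)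
    (hμ : ContDiffOn ℝ 1 μ (Set.Icc 0 T)) (hμT : μ T = 0) :
    Tendsto (fun r : ℝ =>
        r * (∫ s in (0:ℝ)..T, μ s * Real.cos (r * (T - s))) - μ 0 * Real.sin (r * T))
      atTop (nhds 0) :=
  riemann_lebesgue_cos_asymptotics_general T hT μ hμ
end

section
/- Let T > 0 and let μ : [0, T] → ℝ be continuously differentiable with μ(T) = 0. Then r²·[ (∫_0^T μ(s)·sin(r·(T - s)) ds)² + (∫_0^T μ(s)·cos(r·(T - s)) ds)² ] → μ(0)² as r → +∞. -/
/-!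
The two integrals are the imaginary and real parts of `∫₀ᵀ μ(s) e^{ir(T-s)} ds`, so the quantity
is `|r ∫₀ᵀ μ(s) e^{-irs} ds|²`. One integration by parts, using `μ(T) = 0`, gives
`r ∫₀ᵀ μ(s) e^{-irs} ds = -i (μ(0) + ∫₀ᵀ μ'(s) e^{-irs} ds)`, and the last integral tends to `0`
by the Riemann–Lebesgue lemma.
-/

open Real Filter MeasureTheory Complex Topology

variable {E : Type*} [NormedAddCommGroup E] [NormedSpace ℂ E]

theorem tendsto_setIntegral_exp_neg_mul_I_smul_cocompact (f : ℝ → E) {S : Set ℝ}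
    (hS : MeasurableSet S) :
    Tendsto (fun r : ℝ => ∫ s in S, exp (-(r * s) * I) • f s) (cocompact ℝ) (𝓝 0) := by
  have hscale : Tendsto (fun r : ℝ => (2 * π)⁻¹ * r) (cocompact ℝ) (cocompact ℝ) :=
    tendsto_cocompact_mul_left₀ (by positivity)
  refine ((Real.tendsto_integral_exp_smul_cocompact (S.indicator f)).comp hscale).congr fun r => ?_
  rw [Function.comp_apply, ← integral_indicator hS]
  congr 1 with s
  by_cases hs : s ∈ S
  · simp only [Set.indicator_of_mem hs, Circle.smul_def, Real.fourierChar_apply]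
    congr 2
    push_cast
    field_simp
  · simp [Set.indicator_of_notMem hs]

theorem tendsto_intervalIntegral_exp_neg_mul_I_smul_cocompact (f : ℝ → E) (a b : ℝ) :
    Tendsto (fun r : ℝ => ∫ s in a..b, exp (-(r * s) * I) • f s) (cocompact ℝ) (𝓝 0) := by
  simpa only [intervalIntegral, sub_zero] using
    (tendsto_setIntegral_exp_neg_mul_I_smul_cocompact f measurableSet_Ioc).sub
      (tendsto_setIntegral_exp_neg_mul_I_smul_cocompact f measurableSet_Ioc)

theorem hasDerivAt_exp_neg_mul_I_div (r : ℝ) (hr : r ≠ 0) (x : ℝ) :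
    HasDerivAt (fun s : ℝ => I * exp (-(r * s) * I) / r) (exp (-(r * x) * I)) x := by
  have hlin : HasDerivAt (fun s : ℝ => -((r : ℂ) * s) * I) (-(r : ℂ) * I) x := by
    simpa using (((hasDerivAt_id x).ofReal_comp.const_mul (r : ℂ)).neg).mul_const I
  refine ((hlin.cexp.const_mul I).div_const (r : ℂ)).congr_deriv ?_
  have : (r : ℂ) ≠ 0 := ofReal_ne_zero.mpr hr
  field_simp
  ring_nf
  rw [I_sq]
  ring

theorem smul_integral_exp_neg_mul_I_smul_eq [CompleteSpace E] {f f' : ℝ → E} {a b r : ℝ}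
    (hr : r ≠ 0) (hf : ∀ x ∈ Set.uIcc a b, HasDerivWithinAt f (f' x) (Set.uIcc a b) x)
    (hf' : IntervalIntegrable f' volume a b) :
    (r : ℂ) • ∫ s in a..b, exp (-(r * s) * I) • f s =
      I • (exp (-(r * b) * I) • f b - exp (-(r * a) * I) • f a
        - ∫ s in a..b, exp (-(r * s) * I) • f' s) := by
  set e : ℝ → ℂ := fun s => I * exp (-(r * s) * I) / r
  have he : ∀ x : ℝ, HasDerivAt e (exp (-(r * x) * I)) x := hasDerivAt_exp_neg_mul_I_div r hr
  have hparts := intervalIntegral.integral_deriv_smul_eq_sub_of_hasDeriv_right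
    (fun x _ => (he x).continuousAt.continuousWithinAt) (fun x hx => (hf x hx).continuousWithinAt)
    (fun x _ => (he x).hasDerivWithinAt)
    (fun x hx =>
      ((hf x (Set.mem_Icc_of_Ioo hx)).hasDerivAt (Icc_mem_nhds hx.1 hx.2)).hasDerivWithinAt)
    ((by fun_prop : Continuous fun s : ℝ => exp (-(r * s) * I)).intervalIntegrable _ _) hf'
  have he_smul : ∀ s (v : E), e s • v = ((r : ℂ)⁻¹ * I) • exp (-(r * s) * I) • v := by
    intro s v
    rw [smul_smul]
    congr 1
    simp only [e]
    ring
  have hcont : ContinuousOn f (Set.uIcc a b) := fun x hx => (hf x hx).continuousWithinAt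
  have hint : IntervalIntegrable (fun s => exp (-(r * s) * I) • f s) volume a b :=
    (ContinuousOn.smul (by fun_prop) hcont).intervalIntegrable
  have hint' : IntervalIntegrable (fun s => e s • f' s) volume a b :=
    hf'.continuousOn_smul (by fun_prop)
  rw [intervalIntegral.integral_add hint hint', eq_sub_iff_add_eq.symm] at hparts
  simp only [he_smul, intervalIntegral.integral_smul, ← smul_sub] at hparts
  rw [hparts, smul_smul, ← mul_assoc, mul_inv_cancel₀ (ofReal_ne_zero.mpr hr), one_mul]

theorem tendsto_norm_smul_integral_exp_neg_mul_I_smul [CompleteSpace E] {f : ℝ → E} {a b : ℝ}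
    (hab : a < b) (hf : ContDiffOn ℝ 1 f (Set.Icc a b)) (hfb : f b = 0) :
    Tendsto (fun r : ℝ => ‖(r : ℂ) • ∫ s in a..b, exp (-(r * s) * I) • f s‖) atTop
      (𝓝 ‖f a‖) := by
  set f' := derivWithin f (Set.Icc a b)
  have hIcc : Set.uIcc a b = Set.Icc a b := Set.uIcc_of_le hab.le
  have hf' : IntervalIntegrable f' volume a b :=
    (hf.continuousOn_derivWithin (uniqueDiffOn_Icc hab) le_rfl).intervalIntegrable_of_Icc hab.le
  have hf_deriv : ∀ x ∈ Set.uIcc a b, HasDerivWithinAt f (f' x) (Set.uIcc a b) x := by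
    rw [hIcc]
    exact fun x hx => (hf.differentiableOn one_ne_zero x hx).hasDerivWithinAt
  set G : ℝ → E := fun r => ∫ s in a..b, exp (-(r * s) * I) • f' s
  have hG : Tendsto G atTop (𝓝 0) :=
    (tendsto_intervalIntegral_exp_neg_mul_I_smul_cocompact f' a b).mono_left atTop_le_cocompact
  have hparts : ∀ r : ℝ, r ≠ 0 → ‖(r : ℂ) • ∫ s in a..b, exp (-(r * s) * I) • f s‖
      = ‖exp (-(r * a) * I) • f a + G r‖ := by
    intro r hr
    rw [smul_integral_exp_neg_mul_I_smul_eq hr hf_deriv hf', hfb, smul_zero, zero_sub, norm_smul,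
      norm_I, one_mul, ← neg_add', norm_neg]
  rw [tendsto_iff_norm_sub_tendsto_zero]
  refine squeeze_zero_norm' ?_ (tendsto_norm_zero.comp hG)
  filter_upwards [eventually_ne_atTop 0] with r hr
  have hunit : ‖exp (-(r * a) * I) • f a‖ = ‖f a‖ := by
    rw [norm_smul, ← ofReal_mul, ← ofReal_neg, norm_exp_ofReal_mul_I, one_mul]
  rw [hparts r hr, ← hunit, Real.norm_eq_abs]
  simpa using abs_norm_sub_norm_le (exp (-(r * a) * I) • f a + G r) (exp (-(r * a) * I) • f a)

theorem sq_intervalIntegral_mul_sin_add_sq_intervalIntegral_mul_cos {f : ℝ → ℝ} {a b : ℝ}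
    (hf : IntervalIntegrable f volume a b) (r c : ℝ) :
    (∫ s in a..b, f s * Real.sin (r * (c - s))) ^ 2
        + (∫ s in a..b, f s * Real.cos (r * (c - s))) ^ 2 =
      ‖∫ s in a..b, exp (-(r * s) * I) • (f s : ℂ)‖ ^ 2 := by
  set z := ∫ s in a..b, exp (↑(r * (c - s)) * I) * (f s : ℂ)
  have hint : IntervalIntegrable (fun s => exp (↑(r * (c - s)) * I) * (f s : ℂ)) volume a b :=
    IntervalIntegrable.continuousOn_mul ⟨hf.1.ofReal, hf.2.ofReal⟩ (by fun_prop)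
  have hre : z.re = ∫ s in a..b, f s * Real.cos (r * (c - s)) := by
    rw [← RCLike.re_eq_complex_re, ← intervalIntegral.intervalIntegral_re hint]
    refine intervalIntegral.integral_congr fun s _ => ?_
    rw [RCLike.re_eq_complex_re, mul_re, exp_ofReal_mul_I_re, exp_ofReal_mul_I_im, ofReal_re,
      ofReal_im, mul_zero, sub_zero, mul_comm]
  have him : z.im = ∫ s in a..b, f s * Real.sin (r * (c - s)) := by
    rw [← RCLike.im_eq_complex_im, ← intervalIntegral.intervalIntegral_im hint]
    refine intervalIntegral.integral_congr fun s _ => ?_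
    rw [RCLike.im_eq_complex_im, mul_im, exp_ofReal_mul_I_re, exp_ofReal_mul_I_im, ofReal_re,
      ofReal_im, mul_zero, zero_add, mul_comm]
  have hz : z = exp (↑(r * c) * I) * ∫ s in a..b, exp (-(r * s) * I) • (f s : ℂ) := by
    rw [← intervalIntegral.integral_const_mul]
    refine intervalIntegral.integral_congr fun s _ => ?_
    rw [smul_eq_mul, ← mul_assoc, ← Complex.exp_add]
    push_cast
    ring_nf
  rw [← hre, ← him, ← one_mul ‖_‖, ← norm_exp_ofReal_mul_I (r * c), ← norm_mul, ← hz,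
    Complex.sq_norm, normSq_apply]
  ring

theorem Jn_limit
    (T : ℝ) (hT : 0 < T) (μ : ℝ → ℝ)
    (hμ : ContDiffOn ℝ 1 μ (Set.Icc 0 T)) (hμT : μ T = 0) :
    Tendsto (fun r : ℝ =>
        r ^ 2 * ((∫ s in (0:ℝ)..T, μ s * Real.sin (r * (T - s))) ^ 2
               + (∫ s in (0:ℝ)..T, μ s * Real.cos (r * (T - s))) ^ 2))
      atTop (nhds (μ 0 ^ 2)) := by
  have hlim := tendsto_norm_smul_integral_exp_neg_mul_I_smul hT
    (ofRealCLM.contDiff.comp_contDiffOn hμ) (by simp [hμT])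
  have hμ_int : IntervalIntegrable μ volume 0 T :=
    hμ.continuousOn.intervalIntegrable_of_Icc hT.le
  simp only [Function.comp_apply, ofRealCLM_apply, norm_real, Real.norm_eq_abs] at hlim
  refine (sq_abs (μ 0) ▸ hlim.pow 2).congr fun r => ?_
  rw [sq_intervalIntegral_mul_sin_add_sq_intervalIntegral_mul_cos hμ_int r T, norm_smul, mul_pow,
    norm_real, Real.norm_eq_abs, sq_abs]
end

section
/- Let C1, C3, a, θ0, θ, η0 be positive real numbers with η0 < 1 and a·θ/θ0 < 1. Then there exists a constant C > 0 with the following property: whenever F ≥ 0, M ≥ 0 and 0 < η ≤ 1 − η0 satisfy F ≤ C1·exp(C3·N^a)·η + C1·M·N^{−θ0} for every positive integer N, one has F ≤ C·(1 + M)·(log(1/η))^{−θ}. -/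
open Real Filter Asymptotics

set_option maxHeartbeats 1000000 in
theorem log_stability_optimization
    (C1 C3 a θ0 θ η0 : ℝ)
    (hC1 : 0 < C1) (hC3 : 0 < C3) (ha : 0 < a) (hθ0 : 0 < θ0) (hθ : 0 < θ)
    (hη0 : 0 < η0) (hη0' : η0 < 1) (hexp : a * θ / θ0 < 1) :
    ∃ C : ℝ, 0 < C ∧ ∀ F M η : ℝ, 0 ≤ F → 0 ≤ M → 0 < η → η ≤ 1 - η0 →
      (∀ N : ℕ, 0 < N →
        F ≤ C1 * Real.exp (C3 * (N : ℝ) ^ a) * η + C1 * M * (N : ℝ) ^ (-θ0)) →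
      F ≤ C * (1 + M) * (Real.log (1 / η)) ^ (-θ) := by
  set b := θ / θ0 with hb
  have hbpos : 0 < b := div_pos hθ hθ0
  set q := a * b with hq
  have hqpos : 0 < q := mul_pos ha hbpos
  have hq1 : q < 1 := by
    rw [hq, hb, ← mul_div_assoc]; exact hexp
  set c := C3 * 2 ^ a with hc
  have hcpos : 0 < c := mul_pos hC3 (rpow_pos_of_pos two_pos a)
  -- eventual bound : c * L^q + θ * log L ≤ L
  have E1 : ∀ᶠ L : ℝ in atTop, θ * Real.log L ≤ (1 / 2) * L := by
    have h := (Real.isLittleO_log_id_atTop.const_mul_left θ).bound (by norm_num : (0:ℝ) < 1/2)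
    filter_upwards [h, eventually_ge_atTop (0 : ℝ)] with L hL hL0
    calc θ * Real.log L ≤ ‖θ * Real.log L‖ := le_norm_self _
      _ ≤ 1 / 2 * ‖id L‖ := hL
      _ = 1 / 2 * L := by simp [abs_of_nonneg hL0]
  have E2 : ∀ᶠ L : ℝ in atTop, c * L ^ q ≤ (1 / 2) * L := by
    have h := (tendsto_rpow_neg_atTop (by linarith : 0 < 1 - q)).eventually_le_const
      (show (0:ℝ) < 1 / 2 / c by positivity)
    filter_upwards [h, eventually_ge_atTop (1 : ℝ)] with L hL hL1
    have hLpos : 0 < L := lt_of_lt_of_le one_pos hL1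
    have : L ^ q = L ^ (-(1 - q)) * L := by
      rw [← Real.rpow_add_one hLpos.ne' (-(1 - q))]; ring_nf
    rw [this, ← mul_assoc]
    have h2 : c * L ^ (-(1 - q)) ≤ 1 / 2 := by
      rw [mul_comm]; exact (le_div_iff₀ hcpos).mp hL
    exact mul_le_mul_of_nonneg_right h2 hLpos.le
  obtain ⟨T, hT⟩ := eventually_atTop.mp ((E1.and E2).and (eventually_ge_atTop (1 : ℝ)))
  have hT1 : 1 ≤ T := (hT T le_rfl).2
  have hTpos : 0 < T := lt_of_lt_of_le one_pos hT1
  set A := Real.exp (C3 * (T ^ b + 1) ^ a) * T ^ θ with hA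
  have hA1 : 1 ≤ A := by
    have h1 : 1 ≤ Real.exp (C3 * (T ^ b + 1) ^ a) := by
      apply Real.one_le_exp; positivity
    have h2 : 1 ≤ T ^ θ := Real.one_le_rpow hT1 hθ.le
    nlinarith
  refine ⟨C1 * A, by positivity, ?_⟩
  intro F M η hF hM hηpos hηle hbound
  set L := Real.log (1 / η) with hL
  have hη1 : η < 1 := lt_of_le_of_lt hηle (by linarith)
  have hLpos : 0 < L := Real.log_pos ((one_lt_div hηpos).mpr hη1)
  have hηexp : η = Real.exp (-L) := by
    rw [hL, Real.log_div one_ne_zero hηpos.ne', Real.log_one, zero_sub, neg_neg,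
      Real.exp_log hηpos]
  set N := ⌈L ^ b⌉₊ with hN
  have hLb : 0 < L ^ b := rpow_pos_of_pos hLpos b
  have hNpos : 0 < N := Nat.ceil_pos.mpr hLb
  have hN1 : L ^ b ≤ (N : ℝ) := Nat.le_ceil _
  have hN2 : (N : ℝ) ≤ L ^ b + 1 := (Nat.ceil_lt_add_one hLb.le).le
  have hbd := hbound N hNpos
  -- second term
  have hterm2 : ((N : ℝ)) ^ (-θ0) ≤ L ^ (-θ) := by
    have h1 : ((N : ℝ)) ^ (-θ0) ≤ (L ^ b) ^ (-θ0) :=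
      Real.rpow_le_rpow_of_nonpos hLb hN1 (by linarith)
    have h2 : (L ^ b) ^ (-θ0) = L ^ (-θ) := by
      rw [← Real.rpow_mul hLpos.le, hb]
      congr 1
      field_simp
    linarith [h1, h2.symm.le]
  -- first term
  have hterm1 : Real.exp (C3 * (N : ℝ) ^ a) * η ≤ A * L ^ (-θ) := by
    by_cases hcase : T ≤ L
    · obtain ⟨⟨e1, e2⟩, _⟩ := hT L hcase
      have hL1 : 1 ≤ L := le_trans hT1 hcase
      have hLb1 : 1 ≤ L ^ b := Real.one_le_rpow hL1 hbpos.le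
      have hNa : (N : ℝ) ^ a ≤ 2 ^ a * L ^ q := by
        calc (N : ℝ) ^ a ≤ (2 * L ^ b) ^ a := by
              apply Real.rpow_le_rpow (Nat.cast_nonneg _) (by linarith) ha.le
          _ = 2 ^ a * (L ^ b) ^ a := Real.mul_rpow two_pos.le hLb.le
          _ = 2 ^ a * L ^ q := by rw [← Real.rpow_mul hLpos.le, hq, mul_comm a b]
      have key : C3 * (N : ℝ) ^ a - L ≤ -(θ * Real.log L) := by
        have : C3 * (N : ℝ) ^ a ≤ c * L ^ q := by
          rw [hc, mul_assoc]
          exact mul_le_mul_of_nonneg_left hNa hC3.le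
        linarith
      calc Real.exp (C3 * (N : ℝ) ^ a) * η
          = Real.exp (C3 * (N : ℝ) ^ a - L) := by rw [hηexp, ← Real.exp_add]; ring_nf
        _ ≤ Real.exp (-(θ * Real.log L)) := Real.exp_le_exp.mpr key
        _ = L ^ (-θ) := by rw [Real.rpow_def_of_pos hLpos]; ring_nf
        _ ≤ A * L ^ (-θ) := by
            nlinarith [rpow_pos_of_pos hLpos (-θ)]
    · push_neg at hcase
      have hNT : (N : ℝ) ≤ T ^ b + 1 := by
        have : L ^ b ≤ T ^ b := Real.rpow_le_rpow hLpos.le hcase.le hbpos.le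
        linarith
      have hNa : (N : ℝ) ^ a ≤ (T ^ b + 1) ^ a :=
        Real.rpow_le_rpow (Nat.cast_nonneg _) hNT ha.le
      have hTθ : T ^ (-θ) ≤ L ^ (-θ) :=
        Real.rpow_le_rpow_of_nonpos hLpos hcase.le (by linarith)
      have hTT : T ^ θ * T ^ (-θ) = 1 := by
        rw [← Real.rpow_add hTpos]; simp
      have hexp1 : Real.exp (C3 * (N : ℝ) ^ a) ≤ Real.exp (C3 * (T ^ b + 1) ^ a) :=
        Real.exp_le_exp.mpr (mul_le_mul_of_nonneg_left hNa hC3.le)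
      calc Real.exp (C3 * (N : ℝ) ^ a) * η ≤ Real.exp (C3 * (T ^ b + 1) ^ a) * 1 := by
            apply mul_le_mul hexp1 hη1.le hηpos.le (Real.exp_pos _).le
        _ = A * T ^ (-θ) := by rw [hA, mul_assoc, hTT]
        _ ≤ A * L ^ (-θ) :=
            mul_le_mul_of_nonneg_left hTθ (by positivity)
  -- combine
  have hLθ : 0 < L ^ (-θ) := rpow_pos_of_pos hLpos (-θ)
  calc F ≤ C1 * Real.exp (C3 * (N : ℝ) ^ a) * η + C1 * M * (N : ℝ) ^ (-θ0) := hbd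
    _ ≤ C1 * (A * L ^ (-θ)) + C1 * M * L ^ (-θ) := by
        have h1 : C1 * Real.exp (C3 * (N : ℝ) ^ a) * η ≤ C1 * (A * L ^ (-θ)) := by
          rw [mul_assoc]; exact mul_le_mul_of_nonneg_left hterm1 hC1.le
        have h2 : C1 * M * (N : ℝ) ^ (-θ0) ≤ C1 * M * L ^ (-θ) :=
          mul_le_mul_of_nonneg_left hterm2 (by positivity)
        linarith
    _ ≤ C1 * A * (1 + M) * L ^ (-θ) := by
        nlinarith [mul_nonneg (mul_nonneg (mul_nonneg hC1.le hM) hLθ.le) (sub_nonneg.mpr hA1)]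
end
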